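/- Characterization of achievable robust competitive ratios for resource allocation with predictions: fix an RRAwP instance and a threshold Φ ≤ 1. There exists an allocation policy guaranteeing ratio Φ if and only if, for every τ ∈ {1,…,T} and all parameter vectors θ, θ′ ∈ ∏_{i=1}^{d} [θ̲_{0,i}, θ̄_{0,i}] with |θ_i − θ′_i| ≤ Δ_{τ,i} for every i ∈ {1,…,d}, one has R_{T+1}(θ) + Σ_{t=τ+1}^{T} V_t ≥ L_{T+1}(θ′). -/

import Mathlib

/-- An instance of the robust resource allocation with predictions (RRAwP) problem. -/
structure RRAwP where
  /-- number of periods -/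
  T : ℕ
  /-- number of unknown parameters -/
  nd : ℕ
  /-- left endpoints of the initial prediction intervals -/
  θlo : ℕ → ℝ
  /-- right endpoints of the initial prediction intervals -/
  θhi : ℕ → ℝ
  /-- prediction-error upper bounds, indexed by period and parameter -/
  Δ : ℕ → ℕ → ℝ
  /-- resource supplies -/
  Vcap : ℕ → ℝ
  /-- the parametric utility function `u(x, y; θ)` -/
  u : ℝ → ℝ → (ℕ → ℝ) → ℝ

namespace RRAwP

variable (M : RRAwP)

/-- The total available resource `V = V_1 + … + V_T`. -/
noncomputable def Vtot : ℝ := ∑ t ∈ Finset.Icc 1 M.T, M.Vcap t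

/-- Membership of a parameter vector in the initial prediction box. -/
def InBox (θ : ℕ → ℝ) : Prop :=
  ∀ i, 1 ≤ i → i ≤ M.nd → M.θlo i ≤ θ i ∧ θ i ≤ M.θhi i

/-- The structural hypotheses on an RRAwP instance. -/
def IsValid : Prop :=
  1 ≤ M.T ∧ 1 ≤ M.nd ∧
  (∀ i, 1 ≤ i → i ≤ M.nd → 0 ≤ M.θlo i ∧ M.θlo i ≤ M.θhi i) ∧
  (∀ t i, 1 ≤ t → t + 1 ≤ M.T → 1 ≤ i → i ≤ M.nd → M.Δ (t + 1) i ≤ M.Δ t i) ∧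
  (∀ t i, 1 ≤ t → t ≤ M.T → 1 ≤ i → i ≤ M.nd → 0 ≤ M.Δ t i) ∧
  (∀ i, 1 ≤ i → i ≤ M.nd → M.Δ 1 i ≤ M.θhi i - M.θlo i) ∧
  (∀ t, 1 ≤ t → t ≤ M.T → 0 ≤ M.Vcap t) ∧
  (∀ θ, M.InBox θ →
    (∀ x y, x ∈ Set.Icc (0 : ℝ) M.Vtot → y ∈ Set.Icc (0 : ℝ) M.Vtot → 0 ≤ M.u x y θ) ∧
    ContinuousOn (fun q : ℝ × ℝ => M.u q.1 q.2 θ)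
      (Set.Icc (0 : ℝ) M.Vtot ×ˢ Set.Icc (0 : ℝ) M.Vtot) ∧
    (∀ x x' y, 0 ≤ x → x ≤ x' → x' ≤ M.Vtot → y ∈ Set.Icc (0 : ℝ) M.Vtot →
      M.u x y θ ≤ M.u x' y θ) ∧
    (∀ x y y', x ∈ Set.Icc (0 : ℝ) M.Vtot → 0 ≤ y → y ≤ y' → y' ≤ M.Vtot →
      M.u x y θ ≤ M.u x y' θ) ∧
    ConcaveOn ℝ (Set.Icc (0 : ℝ) M.Vtot ×ˢ Set.Icc (0 : ℝ) M.Vtot)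
      (fun q : ℝ × ℝ => M.u q.1 q.2 θ))

/-- An admissible scenario: regular multivariate prediction sequences together with a
consistent parameter vector. -/
def Scenario (lo hi : ℕ → ℕ → ℝ) (θ : ℕ → ℝ) : Prop :=
  ∀ i, 1 ≤ i → i ≤ M.nd →
    M.θlo i ≤ lo 1 i ∧ hi 1 i ≤ M.θhi i ∧
    (∀ t, 1 ≤ t → t ≤ M.T → lo t i ≤ hi t i ∧ hi t i - lo t i ≤ M.Δ t i) ∧
    (∀ t, 2 ≤ t → t ≤ M.T → lo (t - 1) i ≤ lo t i ∧ hi t i ≤ hi (t - 1) i) ∧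
    lo M.T i ≤ θ i ∧ θ i ≤ hi M.T i

/-- An allocation policy: its action lies in `[0, V_t]` whenever the input intervals have
lengths at most `Δ_{t,i}`. -/
def IsPolicy (π : ℕ → (ℕ → ℝ) → (ℕ → ℝ) → ℝ → ℝ) : Prop :=
  ∀ t a b x, 1 ≤ t → t ≤ M.T →
    (∀ i, 1 ≤ i → i ≤ M.nd → a i ≤ b i ∧ b i - a i ≤ M.Δ t i) →
    0 ≤ π t a b x ∧ π t a b x ≤ M.Vcap t

/-- The cumulative investments into sector A produced by a decision rule `π`:
`x_1 = 0` and `x_{t+1} = x_t + π_t(([lo_{t,i}, hi_{t,i}])_i, x_t)`. -/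
noncomputable def inv (π : ℕ → (ℕ → ℝ) → (ℕ → ℝ) → ℝ → ℝ) (lo hi : ℕ → ℕ → ℝ) : ℕ → ℝ
  | 0 => 0
  | t + 1 => if t = 0 then 0 else inv π lo hi t + π t (lo t) (hi t) (inv π lo hi t)

/-- The hindsight optimum `opt(θ) = max_{x ∈ [0,V]} u(x, V − x; θ)`. -/
noncomputable def opt (θ : ℕ → ℝ) : ℝ :=
  sSup ((fun x => M.u x (M.Vtot - x) θ) '' Set.Icc (0 : ℝ) M.Vtot)

/-- The policy `π` guarantees competitive ratio `Φ`: on every admissible scenario the final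
allocation achieves utility at least `Φ · opt(θ)`. -/
def Guarantees (π : ℕ → (ℕ → ℝ) → (ℕ → ℝ) → ℝ → ℝ) (Φ : ℝ) : Prop :=
  ∀ lo hi θ, M.Scenario lo hi θ →
    Φ * M.opt θ ≤ M.u (inv π lo hi (M.T + 1)) (M.Vtot - inv π lo hi (M.T + 1)) θ

/-- `L_{T+1}(θ)`: the smallest `x ∈ [0, V]` with `u(x, V−x; θ) ≥ Φ·opt(θ)`. -/
noncomputable def Lfin (Φ : ℝ) (θ : ℕ → ℝ) : ℝ :=
  sInf {x | x ∈ Set.Icc (0 : ℝ) M.Vtot ∧ Φ * M.opt θ ≤ M.u x (M.Vtot - x) θ}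

/-- `R_{T+1}(θ)`: the largest `x ∈ [0, V]` with `u(x, V−x; θ) ≥ Φ·opt(θ)`. -/
noncomputable def Rfin (Φ : ℝ) (θ : ℕ → ℝ) : ℝ :=
  sSup {x | x ∈ Set.Icc (0 : ℝ) M.Vtot ∧ Φ * M.opt θ ≤ M.u x (M.Vtot - x) θ}

end RRAwP

/-!
Necessity: an adversary keeps the predictions at `[min θ θ', max θ θ']` up to period `τ`, so
the policy has invested the same amount `x` under `θ` and under `θ'` by then and can add at most
the supply of the later periods. Since the final allocation lies in the success set of the true
parameter, `L(θ') ≤ x + supplyAfter τ ≤ R(θ) + supplyAfter τ`.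

Sufficiency: the greedy policy invests, in each period, just enough that the largest lower target
`L(ψ)` among the parameters `ψ` still consistent with the predictions remains reachable with the
later supply. The condition keeps it from overshooting `R(ψ)` for every consistent `ψ`, so the
final allocation lies in `[L(θ), R(θ)]`, which the concavity of `x ↦ u(x, V - x; θ)` places in
the success set.
-/

namespace RRAwP

open Set

variable {M : RRAwP}

section Utility

variable (M) in
noncomputable def splitUtility (θ : ℕ → ℝ) (x : ℝ) : ℝ := M.u x (M.Vtot - x) θ

variable (M) in
def successSet (Φ : ℝ) (θ : ℕ → ℝ) : Set ℝ :=
  {x ∈ Icc 0 M.Vtot | Φ * M.opt θ ≤ M.splitUtility θ x}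

lemma Vtot_nonneg (hM : M.IsValid) : 0 ≤ M.Vtot :=
  Finset.sum_nonneg fun t ht =>
    hM.2.2.2.2.2.2.1 t (Finset.mem_Icc.mp ht).1 (Finset.mem_Icc.mp ht).2

lemma mapsTo_split :
    MapsTo (fun x : ℝ => (x, M.Vtot - x)) (Icc 0 M.Vtot) (Icc 0 M.Vtot ×ˢ Icc 0 M.Vtot) :=
  fun _ hx => ⟨hx, by simp only [mem_Icc] at hx ⊢; constructor <;> linarith⟩

lemma continuousOn_splitUtility (hM : M.IsValid) {θ : ℕ → ℝ} (hθ : M.InBox θ) :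
    ContinuousOn (M.splitUtility θ) (Icc 0 M.Vtot) :=
  (hM.2.2.2.2.2.2.2 θ hθ).2.1.comp (by fun_prop) mapsTo_split

lemma concaveOn_splitUtility (hM : M.IsValid) {θ : ℕ → ℝ} (hθ : M.InBox θ) :
    ConcaveOn ℝ (Icc 0 M.Vtot) (M.splitUtility θ) := by
  -- `x ↦ (x, V - x)` is the affine line through `(0, V)` and `(1, V - 1)`.
  have hline : ⇑(AffineMap.lineMap ((0 : ℝ), M.Vtot) ((1 : ℝ), M.Vtot - 1)) =
      fun x => (x, M.Vtot - x) := by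
    ext x <;> simp [AffineMap.lineMap_apply]; ring
  have h := (hM.2.2.2.2.2.2.2 θ hθ).2.2.2.2.comp_affineMap
    (AffineMap.lineMap ((0 : ℝ), M.Vtot) ((1 : ℝ), M.Vtot - 1))
  rw [hline] at h
  exact h.subset (fun x hx => mapsTo_split hx) (convex_Icc 0 M.Vtot)

lemma exists_splitUtility_eq_opt (hM : M.IsValid) {θ : ℕ → ℝ} (hθ : M.InBox θ) :
    ∃ z ∈ Icc 0 M.Vtot, M.splitUtility θ z = M.opt θ := by
  obtain ⟨z, hz, hmax⟩ := isCompact_Icc.exists_isMaxOn (nonempty_Icc.2 (Vtot_nonneg hM))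
    (continuousOn_splitUtility hM hθ)
  exact ⟨z, hz, (IsGreatest.csSup_eq
    ⟨mem_image_of_mem _ hz, forall_mem_image.2 fun _ hy => hmax hy⟩).symm⟩

lemma successSet_nonempty (hM : M.IsValid) {Φ : ℝ} (hΦ : Φ ≤ 1) {θ : ℕ → ℝ}
    (hθ : M.InBox θ) : (M.successSet Φ θ).Nonempty := by
  obtain ⟨z, hz, hzopt⟩ := exists_splitUtility_eq_opt hM hθ
  have hopt : 0 ≤ M.opt θ :=
    hzopt ▸ (hM.2.2.2.2.2.2.2 θ hθ).1 z _ hz ⟨by linarith [hz.2], by linarith [hz.1]⟩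
  exact ⟨z, hz, hzopt.symm ▸ mul_le_of_le_one_left hopt hΦ⟩

lemma isClosed_successSet (hM : M.IsValid) (Φ : ℝ) {θ : ℕ → ℝ} (hθ : M.InBox θ) :
    IsClosed (M.successSet Φ θ) :=
  (continuousOn_splitUtility hM hθ).preimage_isClosed_of_isClosed isClosed_Icc isClosed_Ici

lemma ordConnected_successSet (hM : M.IsValid) (Φ : ℝ) {θ : ℕ → ℝ} (hθ : M.InBox θ) :
    (M.successSet Φ θ).OrdConnected :=
  ((concaveOn_splitUtility hM hθ).convex_ge _).ordConnected

lemma bddBelow_successSet (Φ : ℝ) (θ : ℕ → ℝ) : BddBelow (M.successSet Φ θ) :=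
  ⟨0, fun _ hx => hx.1.1⟩

lemma bddAbove_successSet (Φ : ℝ) (θ : ℕ → ℝ) : BddAbove (M.successSet Φ θ) :=
  ⟨M.Vtot, fun _ hx => hx.1.2⟩

lemma Lfin_le {Φ x : ℝ} {θ : ℕ → ℝ} (hx : x ∈ M.successSet Φ θ) : M.Lfin Φ θ ≤ x :=
  csInf_le (bddBelow_successSet Φ θ) hx

lemma le_Rfin {Φ x : ℝ} {θ : ℕ → ℝ} (hx : x ∈ M.successSet Φ θ) : x ≤ M.Rfin Φ θ :=
  le_csSup (bddAbove_successSet Φ θ) hx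

lemma Lfin_mem_successSet (hM : M.IsValid) {Φ : ℝ} (hΦ : Φ ≤ 1) {θ : ℕ → ℝ}
    (hθ : M.InBox θ) : M.Lfin Φ θ ∈ M.successSet Φ θ :=
  (isClosed_successSet hM Φ hθ).csInf_mem (successSet_nonempty hM hΦ hθ)
    (bddBelow_successSet Φ θ)

lemma Rfin_mem_successSet (hM : M.IsValid) {Φ : ℝ} (hΦ : Φ ≤ 1) {θ : ℕ → ℝ}
    (hθ : M.InBox θ) : M.Rfin Φ θ ∈ M.successSet Φ θ :=
  (isClosed_successSet hM Φ hθ).csSup_mem (successSet_nonempty hM hΦ hθ)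
    (bddAbove_successSet Φ θ)

lemma mem_successSet_of_mem_Icc (hM : M.IsValid) {Φ x : ℝ} (hΦ : Φ ≤ 1) {θ : ℕ → ℝ}
    (hθ : M.InBox θ) (hx : x ∈ Icc (M.Lfin Φ θ) (M.Rfin Φ θ)) : x ∈ M.successSet Φ θ :=
  (ordConnected_successSet hM Φ hθ).out (Lfin_mem_successSet hM hΦ hθ)
    (Rfin_mem_successSet hM hΦ hθ) hx

end Utility

variable (M) in
def supplyAfter (t : ℕ) : ℝ := ∑ s ∈ Finset.Icc (t + 1) M.T, M.Vcap s

lemma supplyAfter_zero : M.supplyAfter 0 = M.Vtot := rfl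

lemma supplyAfter_T : M.supplyAfter M.T = 0 :=
  Finset.sum_eq_zero fun _ hs => absurd (Finset.mem_Icc.1 hs) (by omega)

lemma supplyAfter_eq_add {t : ℕ} (ht : t + 1 ≤ M.T) :
    M.supplyAfter t = M.Vcap (t + 1) + M.supplyAfter (t + 1) := by
  rw [supplyAfter, Finset.Icc_eq_cons_Ioc ht, Finset.sum_cons, ← Finset.Icc_add_one_left_eq_Ioc]
  rfl

lemma Δ_antitone (hM : M.IsValid) {s t i : ℕ} (hs : 1 ≤ s) (hst : s ≤ t) (htT : t ≤ M.T)
    (hi1 : 1 ≤ i) (hin : i ≤ M.nd) : M.Δ t i ≤ M.Δ s i := by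
  induction t, hst using Nat.le_induction with
  | base => exact le_rfl
  | succ n hsn ih => exact (hM.2.2.2.1 n i (hs.trans hsn) htT hi1 hin).trans (ih (by omega))

namespace Scenario

variable {lo hi : ℕ → ℕ → ℝ} {θ : ℕ → ℝ}

lemma nested (hsc : M.Scenario lo hi θ) {s t i : ℕ} (hs : 1 ≤ s) (hst : s ≤ t) (htT : t ≤ M.T)
    (hi1 : 1 ≤ i) (hin : i ≤ M.nd) : lo s i ≤ lo t i ∧ hi t i ≤ hi s i := by
  induction t, hst using Nat.le_induction with
  | base => exact ⟨le_rfl, le_rfl⟩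
  | succ n hsn ih =>
    have hstep := (hsc i hi1 hin).2.2.2.1 (n + 1) (by omega) htT
    rw [Nat.add_sub_cancel] at hstep
    exact ⟨(ih (by omega)).1.trans hstep.1, hstep.2.trans (ih (by omega)).2⟩

lemma inBox (hM : M.IsValid) (hsc : M.Scenario lo hi θ) : M.InBox θ := fun i hi1 hin =>
  have hnest := hsc.nested le_rfl hM.1 le_rfl hi1 hin
  have hsci := hsc i hi1 hin
  ⟨hsci.1.trans (hnest.1.trans hsci.2.2.2.2.1), hsci.2.2.2.2.2.trans (hnest.2.trans hsci.2.1)⟩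

end Scenario

variable (M) in
def InIntervals (a b ψ : ℕ → ℝ) : Prop :=
  ∀ i, 1 ≤ i → i ≤ M.nd → a i ≤ ψ i ∧ ψ i ≤ b i

section Trajectory

variable {π : ℕ → (ℕ → ℝ) → (ℕ → ℝ) → ℝ → ℝ} {lo hi : ℕ → ℕ → ℝ} {θ : ℕ → ℝ}

lemma inv_one : inv π lo hi 1 = 0 := rfl

lemma inv_succ {t : ℕ} (ht : t ≠ 0) :
    inv π lo hi (t + 1) = inv π lo hi t + π t (lo t) (hi t) (inv π lo hi t) := if_neg ht

lemma inv_congr {lo' hi' : ℕ → ℕ → ℝ} {s : ℕ}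
    (h : ∀ t, 1 ≤ t → t < s → lo t = lo' t ∧ hi t = hi' t) :
    inv π lo hi s = inv π lo' hi' s := by
  induction s with
  | zero => rfl
  | succ n ih =>
    rcases Nat.eq_zero_or_pos n with rfl | hn
    · rfl
    · rw [inv_succ hn.ne', inv_succ hn.ne', ih fun t ht1 ht2 => h t ht1 (by omega),
        (h n hn (by omega)).1, (h n hn (by omega)).2]

lemma inv_step_bounds (hπ : M.IsPolicy π) (hsc : M.Scenario lo hi θ) {t : ℕ}
    (ht : t + 1 ≤ M.T) :
    inv π lo hi (t + 1) ≤ inv π lo hi (t + 2) ∧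
      inv π lo hi (t + 2) + M.supplyAfter (t + 1) ≤ inv π lo hi (t + 1) + M.supplyAfter t := by
  have hact := hπ (t + 1) (lo (t + 1)) (hi (t + 1)) (inv π lo hi (t + 1)) (by omega) ht
    fun i hi1 hin => (hsc i hi1 hin).2.2.1 (t + 1) (by omega) ht
  rw [inv_succ (by omega : t + 1 ≠ 0), supplyAfter_eq_add ht]
  constructor <;> linarith [hact.1, hact.2]

lemma inv_mono (hπ : M.IsPolicy π) (hsc : M.Scenario lo hi θ) {τ s : ℕ} (hτs : τ ≤ s)
    (hsT : s ≤ M.T) : inv π lo hi (τ + 1) ≤ inv π lo hi (s + 1) := by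
  induction s, hτs using Nat.le_induction with
  | base => exact le_rfl
  | succ n _ ih => exact (ih (by omega)).trans (inv_step_bounds hπ hsc hsT).1

lemma inv_add_supplyAfter_le (hπ : M.IsPolicy π) (hsc : M.Scenario lo hi θ) {τ s : ℕ}
    (hτs : τ ≤ s) (hsT : s ≤ M.T) :
    inv π lo hi (s + 1) + M.supplyAfter s ≤ inv π lo hi (τ + 1) + M.supplyAfter τ := by
  induction s, hτs using Nat.le_induction with
  | base => exact le_rfl
  | succ n _ ih => exact (inv_step_bounds hπ hsc hsT).2.trans (ih (by omega))

lemma inv_mem_successSet {Φ : ℝ} (hπ : M.IsPolicy π) (hg : M.Guarantees π Φ)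
    (hsc : M.Scenario lo hi θ) : inv π lo hi (M.T + 1) ∈ M.successSet Φ θ := by
  have hlo := inv_mono hπ hsc (Nat.zero_le M.T) le_rfl
  have hhi := inv_add_supplyAfter_le hπ hsc (Nat.zero_le M.T) le_rfl
  rw [supplyAfter_T, supplyAfter_zero, zero_add, inv_one] at hhi
  rw [inv_one] at hlo
  exact ⟨⟨hlo, by linarith⟩, hg lo hi θ hsc⟩

end Trajectory

section Necessity

variable {π : ℕ → (ℕ → ℝ) → (ℕ → ℝ) → ℝ → ℝ}

def revealAfter (τ : ℕ) (c ψ : ℕ → ℝ) : ℕ → ℕ → ℝ :=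
  fun t => if t ≤ τ then c else ψ

lemma scenario_revealAfter (hM : M.IsValid) {τ : ℕ} (hτ1 : 1 ≤ τ) (hτT : τ ≤ M.T)
    {a b ψ : ℕ → ℝ}
    (hab : ∀ i, 1 ≤ i → i ≤ M.nd → M.θlo i ≤ a i ∧ b i ≤ M.θhi i ∧ b i - a i ≤ M.Δ τ i)
    (hψ : M.InIntervals a b ψ) :
    M.Scenario (revealAfter τ a ψ) (revealAfter τ b ψ) ψ := by
  intro i hi1 hin
  obtain ⟨hlo, hhi, hlen⟩ := hab i hi1 hin
  obtain ⟨haψ, hψb⟩ := hψ i hi1 hin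
  refine ⟨by simpa [revealAfter, hτ1] using hlo, by simpa [revealAfter, hτ1] using hhi,
    fun t ht1 htT => ?_, fun t ht2 htT => ?_, ?_, ?_⟩
  · simp only [revealAfter]
    split_ifs with htτ
    · exact ⟨haψ.trans hψb, hlen.trans (Δ_antitone hM ht1 htτ hτT hi1 hin)⟩
    · simpa using hM.2.2.2.2.1 t i ht1 htT hi1 hin
  · simp only [revealAfter]
    split_ifs <;> first | omega | exact ⟨le_rfl, le_rfl⟩ | exact ⟨haψ, hψb⟩
  all_goals simp only [revealAfter]; split_ifs <;> simp [haψ, hψb]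

variable (M) in
def RatioCondition (Φ : ℝ) : Prop :=
  ∀ τ θ θ', 1 ≤ τ → τ ≤ M.T → M.InBox θ → M.InBox θ' →
    (∀ i, 1 ≤ i → i ≤ M.nd → |θ i - θ' i| ≤ M.Δ τ i) →
    M.Lfin Φ θ' ≤ M.Rfin Φ θ + M.supplyAfter τ

theorem ratioCondition_of_guarantees (hM : M.IsValid) {Φ : ℝ} (hπ : M.IsPolicy π)
    (hg : M.Guarantees π Φ) : M.RatioCondition Φ := by
  intro τ θ θ' hτ1 hτT hθ hθ' hclose
  set a : ℕ → ℝ := fun i => min (θ i) (θ' i)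
  set b : ℕ → ℝ := fun i => max (θ i) (θ' i)
  have hab : ∀ i, 1 ≤ i → i ≤ M.nd → M.θlo i ≤ a i ∧ b i ≤ M.θhi i ∧ b i - a i ≤ M.Δ τ i :=
    fun i hi1 hin => ⟨le_min (hθ i hi1 hin).1 (hθ' i hi1 hin).1,
      max_le (hθ i hi1 hin).2 (hθ' i hi1 hin).2,
      (max_sub_min_eq_abs' (θ i) (θ' i)).symm ▸ hclose i hi1 hin⟩
  have hsc := scenario_revealAfter hM hτ1 hτT hab fun _ _ _ => ⟨min_le_left _ _, le_max_left _ _⟩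
  have hsc' := scenario_revealAfter hM hτ1 hτT hab
    fun _ _ _ => ⟨min_le_right _ _, le_max_right _ _⟩
  have hsame : inv π (revealAfter τ a θ') (revealAfter τ b θ') (τ + 1) =
      inv π (revealAfter τ a θ) (revealAfter τ b θ) (τ + 1) :=
    inv_congr fun t _ ht => by simp [revealAfter, show t ≤ τ by omega]
  have hfinal' := inv_add_supplyAfter_le hπ hsc' hτT le_rfl
  rw [supplyAfter_T, add_zero] at hfinal'
  calc M.Lfin Φ θ' ≤ inv π (revealAfter τ a θ') (revealAfter τ b θ') (M.T + 1) :=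
        Lfin_le (inv_mem_successSet hπ hg hsc')
    _ ≤ inv π (revealAfter τ a θ) (revealAfter τ b θ) (τ + 1) + M.supplyAfter τ :=
        hsame ▸ hfinal'
    _ ≤ inv π (revealAfter τ a θ) (revealAfter τ b θ) (M.T + 1) + M.supplyAfter τ :=
        by gcongr; exact inv_mono hπ hsc hτT le_rfl
    _ ≤ M.Rfin Φ θ + M.supplyAfter τ :=
        by gcongr; exact le_Rfin (inv_mem_successSet hπ hg hsc)

end Necessity

section Sufficiency

variable {Φ : ℝ}

variable (M) in
noncomputable def maxLfin (Φ : ℝ) (a b : ℕ → ℝ) : ℝ :=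
  sSup (M.Lfin Φ '' {ψ | M.InBox ψ ∧ M.InIntervals a b ψ})

noncomputable def greedyPolicy (M : RRAwP) (Φ : ℝ) : ℕ → (ℕ → ℝ) → (ℕ → ℝ) → ℝ → ℝ :=
  fun t a b x => min (M.Vcap t) (max 0 (M.maxLfin Φ a b - M.supplyAfter t - x))

lemma isPolicy_greedyPolicy (hM : M.IsValid) : M.IsPolicy (M.greedyPolicy Φ) :=
  fun t _ _ _ ht1 htT _ =>
    ⟨le_min (hM.2.2.2.2.2.2.1 t ht1 htT) (le_max_left _ _), min_le_left _ _⟩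

lemma add_min_max_sub (x v m : ℝ) (hv : 0 ≤ v) :
    x + min v (max 0 (m - x)) = min (x + v) (max x m) := by
  rcases le_total m x with h | h
  · rw [max_eq_left (sub_nonpos.2 h), max_eq_left h, min_eq_right hv, add_zero,
      min_eq_right (by linarith)]
  · rw [max_eq_right (sub_nonneg.2 h), max_eq_right h, ← min_add_add_left, add_sub_cancel]

variable {t : ℕ} {a b : ℕ → ℝ}

lemma Lfin_le_Rfin_add_of_inIntervals (hH : M.RatioCondition Φ) (ht1 : 1 ≤ t) (htT : t ≤ M.T)
    (hab : ∀ i, 1 ≤ i → i ≤ M.nd → b i - a i ≤ M.Δ t i) {ψ ψ' : ℕ → ℝ} (hψ : M.InBox ψ)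
    (hψ' : M.InBox ψ') (hψab : M.InIntervals a b ψ) (hψ'ab : M.InIntervals a b ψ') :
    M.Lfin Φ ψ' ≤ M.Rfin Φ ψ + M.supplyAfter t := by
  refine hH t ψ ψ' ht1 htT hψ hψ' fun i hi1 hin => abs_le.2 ⟨?_, ?_⟩ <;>
    linarith [hab i hi1 hin, hψab i hi1 hin, hψ'ab i hi1 hin]

lemma maxLfin_le (hH : M.RatioCondition Φ) (ht1 : 1 ≤ t) (htT : t ≤ M.T)
    (hab : ∀ i, 1 ≤ i → i ≤ M.nd → b i - a i ≤ M.Δ t i) {ψ : ℕ → ℝ} (hψ : M.InBox ψ)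
    (hψab : M.InIntervals a b ψ) : M.maxLfin Φ a b ≤ M.Rfin Φ ψ + M.supplyAfter t :=
  csSup_le ⟨_, mem_image_of_mem _ ⟨hψ, hψab⟩⟩ <| forall_mem_image.2 fun _ hψ' =>
    Lfin_le_Rfin_add_of_inIntervals hH ht1 htT hab hψ hψ'.1 hψab hψ'.2

lemma Lfin_le_maxLfin (hH : M.RatioCondition Φ) (ht1 : 1 ≤ t) (htT : t ≤ M.T)
    (hab : ∀ i, 1 ≤ i → i ≤ M.nd → b i - a i ≤ M.Δ t i) {ψ : ℕ → ℝ} (hψ : M.InBox ψ)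
    (hψab : M.InIntervals a b ψ) : M.Lfin Φ ψ ≤ M.maxLfin Φ a b :=
  le_csSup ⟨_, forall_mem_image.2 fun _ hψ' =>
    Lfin_le_Rfin_add_of_inIntervals hH ht1 htT hab hψ hψ'.1 hψab hψ'.2⟩
    (mem_image_of_mem _ ⟨hψ, hψab⟩)

lemma greedyPolicy_step (hM : M.IsValid) (hH : M.RatioCondition Φ) (ht1 : 1 ≤ t)
    (htT : t ≤ M.T) (hab : ∀ i, 1 ≤ i → i ≤ M.nd → b i - a i ≤ M.Δ t i) {ψ : ℕ → ℝ}
    (hψ : M.InBox ψ) (hψab : M.InIntervals a b ψ) {x : ℝ}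
    (hLx : M.Lfin Φ ψ - (M.Vcap t + M.supplyAfter t) ≤ x) (hxR : x ≤ M.Rfin Φ ψ) :
    M.Lfin Φ ψ - M.supplyAfter t ≤ x + M.greedyPolicy Φ t a b x ∧
      x + M.greedyPolicy Φ t a b x ≤ M.Rfin Φ ψ := by
  have hle := maxLfin_le hH ht1 htT hab hψ hψab
  have hge := Lfin_le_maxLfin hH ht1 htT hab hψ hψab
  dsimp only [greedyPolicy]
  rw [add_min_max_sub _ _ _ (hM.2.2.2.2.2.2.1 t ht1 htT)]
  exact ⟨le_min (by linarith) (le_max_of_le_right (by linarith)),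
    (min_le_right _ _).trans (max_le hxR (by linarith))⟩

lemma greedyPolicy_invariant (hM : M.IsValid) (hΦ : Φ ≤ 1) (hH : M.RatioCondition Φ)
    {lo hi : ℕ → ℕ → ℝ} {θ : ℕ → ℝ} (hsc : M.Scenario lo hi θ) (ht1 : 1 ≤ t) (htT : t ≤ M.T)
    {ψ : ℕ → ℝ} (hψ : M.InBox ψ) (hψt : M.InIntervals (lo t) (hi t) ψ) :
    M.Lfin Φ ψ - M.supplyAfter t ≤ inv (M.greedyPolicy Φ) lo hi (t + 1) ∧
      inv (M.greedyPolicy Φ) lo hi (t + 1) ≤ M.Rfin Φ ψ := by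
  have hlen : ∀ s, 1 ≤ s → s ≤ M.T → ∀ i, 1 ≤ i → i ≤ M.nd → hi s i - lo s i ≤ M.Δ s i :=
    fun s hs1 hsT i hi1 hin => ((hsc i hi1 hin).2.2.1 s hs1 hsT).2
  induction t, ht1 using Nat.le_induction generalizing ψ with
  | base =>
    have hV : M.Vcap 1 + M.supplyAfter 1 = M.Vtot := (supplyAfter_eq_add htT).symm
    rw [inv_succ one_ne_zero]
    refine greedyPolicy_step hM hH le_rfl htT (hlen 1 le_rfl htT) hψ hψt ?_ ?_ <;> rw [inv_one]
    · linarith [(Lfin_mem_successSet hM hΦ hψ).1.2]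
    · exact (Rfin_mem_successSet hM hΦ hψ).1.1
  | succ n hn ih =>
    have hprev : M.InIntervals (lo n) (hi n) ψ := fun i hi1 hin =>
      have hnest := hsc.nested hn (Nat.le_succ n) htT hi1 hin
      ⟨hnest.1.trans (hψt i hi1 hin).1, (hψt i hi1 hin).2.trans hnest.2⟩
    obtain ⟨hL, hR⟩ := ih (by omega) hψ hprev
    rw [supplyAfter_eq_add htT] at hL
    rw [inv_succ (Nat.succ_ne_zero n)]
    exact greedyPolicy_step hM hH (by omega) htT (hlen (n + 1) (by omega) htT) hψ hψt hL hR

theorem greedyPolicy_guarantees (hM : M.IsValid) (hΦ : Φ ≤ 1) (hH : M.RatioCondition Φ) :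
    M.Guarantees (M.greedyPolicy Φ) Φ := by
  intro lo hi θ hsc
  have hθ := hsc.inBox hM
  have h := greedyPolicy_invariant hM hΦ hH hsc hM.1 le_rfl hθ
    fun i hi1 hin => (hsc i hi1 hin).2.2.2.2
  rw [supplyAfter_T, sub_zero] at h
  exact (mem_successSet_of_mem_Icc hM hΦ hθ h).2

end Sufficiency

end RRAwP

/-- **Proposition (Characterization of achievable robust competitive ratios for RRAwP).**
For `Φ ≤ 1`, an allocation policy guaranteeing ratio `Φ` exists if and only if for every
`τ ∈ {1,…,T}` and all `θ, θ′` in the initial prediction box with `|θ_i − θ′_i| ≤ Δ_{τ,i}`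
for all `i`, one has `R_{T+1}(θ) + Σ_{t=τ+1}^{T} V_t ≥ L_{T+1}(θ′)`. -/
theorem rrawp_ratio_characterization (M : RRAwP) (hM : M.IsValid) (Φ : ℝ) (hΦ : Φ ≤ 1) :
    (∃ π, M.IsPolicy π ∧ M.Guarantees π Φ) ↔
    (∀ τ θ θ', 1 ≤ τ → τ ≤ M.T → M.InBox θ → M.InBox θ' →
      (∀ i, 1 ≤ i → i ≤ M.nd → |θ i - θ' i| ≤ M.Δ τ i) →
      M.Lfin Φ θ' ≤ M.Rfin Φ θ + ∑ t ∈ Finset.Icc (τ + 1) M.T, M.Vcap t) :=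
  ⟨fun ⟨_, hπ, hg⟩ => RRAwP.ratioCondition_of_guarantees hM hπ hg,
    fun hH => ⟨_, RRAwP.isPolicy_greedyPolicy hM, RRAwP.greedyPolicy_guarantees hM hΦ hH⟩⟩
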